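/- The constant 1/2 in Theorem: |∫_a^b f du| ≤ D(M−m)V_a^b(u) for continuous f with m ≤ f ≤ M and u of bounded variation with u(a)=u(b), cannot be replaced by any smaller constant D: taking a=0, b=1, f(x)=x, and u equal to 0 at the endpoints 0 and 1 and equal to 1 on (0,1), one has ∫_0^1 f du = −1, M−m = 1, and V_0^1(u) = 2, forcing D ≥ 1/2. -/

import Mathlib

open MeasureTheory Set

/-- `I` is the Riemann–Stieltjes integral of `f` with respect to `u` on `[a,b]`:
Riemann–Stieltjes sums over tagged partitions with small mesh approximate `I`. -/
def IsRSIntegralOn (f u : ℝ → ℝ) (a b I : ℝ) : Prop :=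
  ∀ ε > (0 : ℝ), ∃ δ > (0 : ℝ), ∀ (n : ℕ) (t : Fin (n + 1) → ℝ) (ξ : Fin n → ℝ),
    t 0 = a → t (Fin.last n) = b → Monotone t →
    (∀ i : Fin n, t i.castSucc ≤ ξ i ∧ ξ i ≤ t i.succ ∧ t i.succ - t i.castSucc < δ) →
    |(∑ i : Fin n, f (ξ i) * (u (t i.succ) - u (t i.castSucc))) - I| < ε

/-- The step functions whose difference is our witness. -/
noncomputable def g₁ : ℝ → ℝ := fun x => if 0 < x then 1 else 0
noncomputable def g₂ : ℝ → ℝ := fun x => if 1 ≤ x then 1 else 0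

/-- The witness: `0` at `0` and `1`, equal to `1` on `(0,1)` (and globally `g₁ - g₂`). -/
noncomputable def uu : ℝ → ℝ := fun x => g₁ x - g₂ x

lemma g₁_mono : Monotone g₁ := by
  intro x y hxy
  simp only [g₁]
  split_ifs with h1 h2 <;> norm_num <;> exact h2 (lt_of_lt_of_le h1 hxy)

lemma g₂_mono : Monotone g₂ := by
  intro x y hxy
  simp only [g₂]
  split_ifs with h1 h2 <;> norm_num <;> exact h2 (le_trans h1 hxy)

lemma uu_zero : uu 0 = 0 := by norm_num [uu, g₁, g₂]

lemma uu_one : uu 1 = 0 := by norm_num [uu, g₁, g₂]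

lemma uu_mid {x : ℝ} (h0 : 0 < x) (h1 : x < 1) : uu x = 1 := by
  simp [uu, g₁, g₂, h0, not_le.mpr h1]

/-- Subadditivity of variation for a difference of functions. -/
lemma evar_sub_le (f g : ℝ → ℝ) (s : Set ℝ) :
    eVariationOn (fun x => f x - g x) s ≤ eVariationOn f s + eVariationOn g s := by
  refine iSup_le ?_
  rintro ⟨n, u, hu, us⟩
  calc ∑ i ∈ Finset.range n,
        edist ((fun x => f x - g x) (u (i + 1))) ((fun x => f x - g x) (u i))
      ≤ ∑ i ∈ Finset.range n,
          (edist (f (u (i + 1))) (f (u i)) + edist (g (u (i + 1))) (g (u i))) := by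
        refine Finset.sum_le_sum fun i _ => ?_
        simp only [edist_dist, Real.dist_eq]
        rw [← ENNReal.ofReal_add (abs_nonneg _) (abs_nonneg _)]
        apply ENNReal.ofReal_le_ofReal
        have hc : f (u (i + 1)) - g (u (i + 1)) - (f (u i) - g (u i)) =
            (f (u (i + 1)) - f (u i)) + -(g (u (i + 1)) - g (u i)) := by ring
        rw [hc]
        exact (abs_add_le _ _).trans (by rw [abs_neg])
    _ = (∑ i ∈ Finset.range n, edist (f (u (i + 1))) (f (u i))) +
          ∑ i ∈ Finset.range n, edist (g (u (i + 1))) (g (u i)) := Finset.sum_add_distrib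
    _ ≤ _ := add_le_add (eVariationOn.sum_le (f := f) (n := n) hu us) (eVariationOn.sum_le (f := g) (n := n) hu us)

lemma uu_var_le : eVariationOn uu (Icc 0 1) ≤ ENNReal.ofReal 2 := by
  have h1 : eVariationOn g₁ (Icc (0:ℝ) 1) ≤ ENNReal.ofReal 1 := by
    have := (g₁_mono.monotoneOn (Icc (0:ℝ) 1)).eVariationOn_le
      (a := 0) (b := 1) (by norm_num) (by norm_num)
    rw [inter_self] at this
    simpa [g₁] using this
  have h2 : eVariationOn g₂ (Icc (0:ℝ) 1) ≤ ENNReal.ofReal 1 := by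
    have := (g₂_mono.monotoneOn (Icc (0:ℝ) 1)).eVariationOn_le
      (a := 0) (b := 1) (by norm_num) (by norm_num)
    rw [inter_self] at this
    simpa [g₂, show ¬((1:ℝ) ≤ 0) by norm_num] using this
  calc eVariationOn uu (Icc 0 1) ≤ eVariationOn g₁ (Icc 0 1) + eVariationOn g₂ (Icc 0 1) :=
        evar_sub_le g₁ g₂ _
    _ ≤ ENNReal.ofReal 1 + ENNReal.ofReal 1 := add_le_add h1 h2
    _ = ENNReal.ofReal 2 := by rw [← ENNReal.ofReal_add] <;> norm_num

lemma uu_rs : IsRSIntegralOn (fun x => x) uu 0 1 (-1) := by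
  classical
  intro ε hε
  refine ⟨min (ε / 2) (1 / 4), by positivity, ?_⟩
  set δ := min (ε / 2) (1 / 4) with hδdef
  have hδ4 : δ ≤ 1 / 4 := min_le_right _ _
  have hδε : δ ≤ ε / 2 := min_le_left _ _
  rintro (_ | n) t ξ h0 h1 hmono hfine
  · exfalso
    have hl : Fin.last 0 = (0 : Fin 1) := rfl
    rw [hl, h0] at h1
    norm_num at h1
  -- all partition points lie in [0,1]
  have tmem : ∀ j : Fin (n + 2), 0 ≤ t j ∧ t j ≤ 1 := fun j =>
    ⟨h0 ▸ hmono (Fin.zero_le j), h1 ▸ hmono (Fin.le_last j)⟩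
  -- the index where u jumps up
  set A : Finset (Fin (n + 1)) := Finset.univ.filter (fun i => t i.castSucc = 0) with hA
  have hA0 : (0 : Fin (n + 1)) ∈ A := by
    simp only [hA, Finset.mem_filter, Finset.mem_univ, true_and]
    simpa using h0
  have hAne : A.Nonempty := ⟨0, hA0⟩
  set a := A.max' hAne with ha_def
  have haA : t a.castSucc = 0 := by
    have := A.max'_mem hAne
    simpa [hA] using this
  have hamax : ∀ i ∈ A, i ≤ a := fun i hi => A.le_max' i hi
  have hasucc : 0 < t a.succ := by
    by_contra hc
    push_neg at hc
    have h0' : t a.succ = 0 := le_antisymm hc (tmem _).1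
    by_cases hv : a.val < n
    · set j : Fin (n + 1) := ⟨a.val + 1, by omega⟩ with hj
      have hcast : j.castSucc = a.succ := by
        apply Fin.ext; simp [hj]
      have hjA : j ∈ A := by
        simp only [hA, Finset.mem_filter, Finset.mem_univ, true_and]
        rw [hcast]; exact h0'
      have := hamax j hjA
      rw [Fin.le_def] at this
      simp only [hj] at this
      omega
    · have hv' : a.val = n := by omega
      have : a.succ = Fin.last (n + 1) := by
        apply Fin.ext; simp [hv']
      rw [this, h1] at h0'
      norm_num at h0'
  -- the index where u jumps down
  set B : Finset (Fin (n + 1)) := Finset.univ.filter (fun i => t i.succ = 1) with hB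
  have hBlast : (Fin.last n) ∈ B := by
    simp only [hB, Finset.mem_filter, Finset.mem_univ, true_and]
    rw [Fin.succ_last]; exact h1
  have hBne : B.Nonempty := ⟨_, hBlast⟩
  set b := B.min' hBne with hb_def
  have hbB : t b.succ = 1 := by
    have := B.min'_mem hBne
    simpa [hB] using this
  have hbmin : ∀ i ∈ B, b ≤ i := fun i hi => B.min'_le i hi
  have hbcast : t b.castSucc < 1 := by
    by_contra hc
    push_neg at hc
    have h1' : t b.castSucc = 1 := le_antisymm (tmem _).2 hc
    by_cases hv : 0 < b.val
    · set j : Fin (n + 1) := ⟨b.val - 1, by omega⟩ with hj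
      have hsucc : j.succ = b.castSucc := by
        apply Fin.ext; simp [hj]; omega
      have hjB : j ∈ B := by
        simp only [hB, Finset.mem_filter, Finset.mem_univ, true_and]
        rw [hsucc]; exact h1'
      have := hbmin j hjB
      rw [Fin.le_def] at this
      simp only [hj] at this
      omega
    · have hv' : b.val = 0 := by omega
      have hb0 : b.castSucc = 0 := by apply Fin.ext; simp [hv']
      rw [hb0, h0] at h1'
      norm_num at h1'
  -- mesh bounds at the two jumps
  have hmesh_a : t a.succ < δ := by
    have := (hfine a).2.2
    rw [haA] at this; linarith
  have hmesh_b : 1 - δ < t b.castSucc := by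
    have := (hfine b).2.2
    rw [hbB] at this; linarith
  have hab : a ≠ b := by
    intro hc
    rw [hc] at haA
    have : (3:ℝ)/4 < t b.castSucc := by linarith
    rw [haA] at this; norm_num at this
  -- values of uu at the jump endpoints
  have hua1 : uu (t a.castSucc) = 0 := by rw [haA]; exact uu_zero
  have hua2 : uu (t a.succ) = 1 := uu_mid hasucc (by linarith)
  have hub1 : uu (t b.castSucc) = 1 := uu_mid (by linarith) hbcast
  have hub2 : uu (t b.succ) = 0 := by rw [hbB]; exact uu_one
  -- away from a and b the increments of uu vanish
  have hzero : ∀ i : Fin (n + 1), i ≠ a → i ≠ b →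
      uu (t i.succ) - uu (t i.castSucc) = 0 := by
    intro i hia hib
    have hxy : t i.castSucc ≤ t i.succ := hmono (Fin.castSucc_le_succ i)
    rcases eq_or_lt_of_le (tmem i.castSucc |>.1) with hx0 | hx0
    · -- t i.castSucc = 0
      have hxz : t i.castSucc = 0 := hx0.symm
      rcases eq_or_lt_of_le (le_trans (le_of_eq hx0) hxy) with hy0 | hy0
      · rw [hxz, ← hy0, uu_zero]
        ring
      · exfalso
        have hiA : i ∈ A := by
          simp only [hA, Finset.mem_filter, Finset.mem_univ, true_and]; exact hxz
        have hile : i ≤ a := hamax i hiA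
        have hilt : i < a := lt_of_le_of_ne hile hia
        have : t i.succ ≤ t a.castSucc := by
          apply hmono
          rw [Fin.le_def]
          simp only [Fin.val_succ, Fin.coe_castSucc]
          exact hilt
        rw [haA] at this
        linarith
    · -- 0 < t i.castSucc
      rcases eq_or_lt_of_le (tmem i.succ |>.2) with hy1 | hy1
      · -- t i.succ = 1
        rcases eq_or_lt_of_le (le_trans hxy (le_of_eq hy1)) with hx1 | hx1
        · rw [hy1, hx1, uu_one]; ring
        · exfalso
          have hiB : i ∈ B := by
            simp only [hB, Finset.mem_filter, Finset.mem_univ, true_and]; exact hy1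
          have hble : b ≤ i := hbmin i hiB
          have hblt : b < i := lt_of_le_of_ne hble (Ne.symm hib)
          have : t b.succ ≤ t i.castSucc := by
            apply hmono
            rw [Fin.le_def]
            simp only [Fin.val_succ, Fin.coe_castSucc]
            exact hblt
          rw [hbB] at this
          linarith
      · -- t i.succ < 1, so both points are in (0,1)
        rw [uu_mid (lt_of_lt_of_le hx0 hxy) hy1, uu_mid hx0 (lt_of_le_of_lt hxy hy1)]
        ring
  -- compute the Riemann–Stieltjes sum
  have hsum : (∑ i : Fin (n + 1), ξ i * (uu (t i.succ) - uu (t i.castSucc)))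
      = ξ a - ξ b := by
    have hsub : (∑ i : Fin (n + 1), ξ i * (uu (t i.succ) - uu (t i.castSucc)))
        = ∑ i ∈ ({a, b} : Finset (Fin (n + 1))),
            ξ i * (uu (t i.succ) - uu (t i.castSucc)) := by
      symm
      apply Finset.sum_subset (Finset.subset_univ _)
      intro i _ hi
      simp only [Finset.mem_insert, Finset.mem_singleton, not_or] at hi
      rw [hzero i hi.1 hi.2]
      ring
    rw [hsub, Finset.sum_pair hab, hua1, hua2, hub1, hub2]
    ring
  rw [hsum]
  -- estimate
  have hξa1 : 0 ≤ ξ a := haA ▸ (hfine a).1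
  have hξa2 : ξ a < δ := lt_of_le_of_lt (hfine a).2.1 hmesh_a
  have hξb1 : 1 - δ < ξ b := lt_of_lt_of_le hmesh_b (hfine b).1
  have hξb2 : ξ b ≤ 1 := hbB ▸ (hfine b).2.1
  rw [abs_of_nonneg (by linarith)]
  linarith

theorem median_principle_stieltjes_sharp
    (D : ℝ)
    (h : ∀ (a b m M I : ℝ) (f u : ℝ → ℝ), a < b →
      ContinuousOn f (Icc a b) →
      (∀ x ∈ Icc a b, m ≤ f x ∧ f x ≤ M) →
      BoundedVariationOn u (Icc a b) →
      u a = u b →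
      IsRSIntegralOn f u a b I →
      |I| ≤ D * (M - m) * (eVariationOn u (Icc a b)).toReal) :
    (1 : ℝ) / 2 ≤ D := by
  have hbv : BoundedVariationOn uu (Icc 0 1) :=
    ne_top_of_le_ne_top ENNReal.ofReal_ne_top uu_var_le
  have key := h 0 1 0 1 (-1) (fun x => x) uu one_pos
    (continuous_id.continuousOn)
    (fun x hx => ⟨hx.1, hx.2⟩) hbv (by rw [uu_zero, uu_one]) uu_rs
  have hvar : (eVariationOn uu (Icc 0 1)).toReal ≤ 2 := by
    have := ENNReal.toReal_mono ENNReal.ofReal_ne_top uu_var_le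
    rwa [ENNReal.toReal_ofReal (by norm_num)] at this
  have hvnn : 0 ≤ (eVariationOn uu (Icc 0 1)).toReal := ENNReal.toReal_nonneg
  rw [abs_neg, abs_one] at key
  by_cases hD : 0 ≤ D
  · nlinarith
  · push_neg at hD
    nlinarith
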